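/- arXiv:2108.06570 — 5 statements merged into one kernel-verified Lean document; each statement's English description precedes it below -/
import Mathlib

section
/- In the ring of 4×4 matrices over the Laurent polynomial ring L = F[x^{±1}, y^{±1}, z^{±1}] over a field F, the matrices A and B defined below satisfy the relations B^{-1} A² B = A^{-2} and A^{-1} B² A = B^{-2}. -/
/-! `A²` is the diagonal matrix `diag(x, x, x⁻¹, x⁻¹)` and `B²` is `diag(y, y⁻¹, y, y⁻¹)`.
Both `A` and `B` are monomial matrices, and conjugating a diagonal matrix by a monomial matrix
permutes its diagonal entries: `B` exchanges coordinates `1 ↔ 3`, `2 ↔ 4`, which turns `A²` into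
`A⁻²`, and `A` exchanges `1 ↔ 2`, `3 ↔ 4`, which turns `B²` into `B⁻²`. -/

noncomputable section

/-- The Laurent polynomial ring `F[x^{±1}, y^{±1}, z^{±1}]`. -/
abbrev L (F : Type*) [Field F] := AddMonoidAlgebra F (ℤ × ℤ × ℤ)

/-- The monomial `x^i y^j z^k` in `L F`. -/
def mon (F : Type*) [Field F] (i j k : ℤ) : L F := AddMonoidAlgebra.single (i, j, k) 1

/-- The matrix `A` corresponding to the generator `a`. -/
def A (F : Type*) [Field F] : Matrix (Fin 4) (Fin 4) (L F) :=
  !![0, 1, 0, 0;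
     mon F 1 0 0, 0, 0, 0;
     0, 0, 0, mon F (-1) 1 (-1);
     0, 0, mon F 0 (-1) 1, 0]

/-- The matrix `B` corresponding to the generator `b`. -/
def B (F : Type*) [Field F] : Matrix (Fin 4) (Fin 4) (L F) :=
  !![0, 0, 1, 0;
     0, 0, 0, 1;
     mon F 0 1 0, 0, 0, 0;
     0, mon F 0 (-1) 0, 0, 0]

open Matrix

lemma Matrix.inv_mul_mul_eq_of_mul_eq {n α : Type*} [Fintype n] [DecidableEq n] [CommRing α]
    {P X Y : Matrix n n α} (hP : IsUnit P) (h : X * P = P * Y) : P⁻¹ * X * P = Y := by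
  rw [mul_assoc, h, nonsing_inv_mul_cancel_left _ _ ((isUnit_iff_isUnit_det P).mp hP)]

section

variable (F : Type*) [Field F]

@[simp]
lemma mon_mul (i j k i' j' k' : ℤ) :
    mon F i j k * mon F i' j' k' = mon F (i + i') (j + j') (k + k') := by
  simp [mon, AddMonoidAlgebra.single_mul_single]

@[simp]
lemma mon_zero : mon F 0 0 0 = 1 :=
  rfl

def Ainv : Matrix (Fin 4) (Fin 4) (L F) :=
  !![0, mon F (-1) 0 0, 0, 0;
     1, 0, 0, 0;
     0, 0, 0, mon F 0 1 (-1);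
     0, 0, mon F 1 (-1) 1, 0]

def Binv : Matrix (Fin 4) (Fin 4) (L F) :=
  !![0, 0, mon F 0 (-1) 0, 0;
     0, 0, 0, mon F 0 1 0;
     1, 0, 0, 0;
     0, 1, 0, 0]

lemma A_mul_Ainv : A F * Ainv F = 1 := by
  ext i j
  fin_cases i <;> fin_cases j <;> simp [A, Ainv, mul_apply, Fin.sum_univ_four, one_apply]

lemma B_mul_Binv : B F * Binv F = 1 := by
  ext i j
  fin_cases i <;> fin_cases j <;> simp [B, Binv, mul_apply, Fin.sum_univ_four, one_apply]

lemma isUnit_A : IsUnit (A F) :=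
  .of_mul_eq_one _ (A_mul_Ainv F)

lemma isUnit_B : IsUnit (B F) :=
  .of_mul_eq_one _ (B_mul_Binv F)

lemma A_inv : (A F)⁻¹ = Ainv F :=
  inv_eq_right_inv (A_mul_Ainv F)

lemma B_inv : (B F)⁻¹ = Binv F :=
  inv_eq_right_inv (B_mul_Binv F)

lemma A_sq : A F ^ 2 = diagonal ![mon F 1 0 0, mon F 1 0 0, mon F (-1) 0 0, mon F (-1) 0 0] := by
  ext i j
  fin_cases i <;> fin_cases j <;> simp [sq, A, mul_apply, Fin.sum_univ_four]

lemma Ainv_sq :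
    Ainv F ^ 2 = diagonal ![mon F (-1) 0 0, mon F (-1) 0 0, mon F 1 0 0, mon F 1 0 0] := by
  ext i j
  fin_cases i <;> fin_cases j <;> simp [sq, Ainv, mul_apply, Fin.sum_univ_four]

lemma B_sq : B F ^ 2 = diagonal ![mon F 0 1 0, mon F 0 (-1) 0, mon F 0 1 0, mon F 0 (-1) 0] := by
  ext i j
  fin_cases i <;> fin_cases j <;> simp [sq, B, mul_apply, Fin.sum_univ_four]

lemma Binv_sq :
    Binv F ^ 2 = diagonal ![mon F 0 (-1) 0, mon F 0 1 0, mon F 0 (-1) 0, mon F 0 1 0] := by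
  ext i j
  fin_cases i <;> fin_cases j <;> simp [sq, Binv, mul_apply, Fin.sum_univ_four]

lemma A_sq_mul_B : A F ^ 2 * B F = B F * Ainv F ^ 2 := by
  rw [A_sq, Ainv_sq]
  ext i j
  fin_cases i <;> fin_cases j <;> simp [B, mul_apply, Fin.sum_univ_four]

lemma B_sq_mul_A : B F ^ 2 * A F = A F * Binv F ^ 2 := by
  rw [B_sq, Binv_sq]
  ext i j
  fin_cases i <;> fin_cases j <;> simp [A, mul_apply, Fin.sum_univ_four]

end

/-- `A` and `B` are invertible and satisfy `B⁻¹ A² B = A⁻²` and `A⁻¹ B² A = B⁻²`. -/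
theorem A_B_satisfy_promislow_relations (F : Type*) [Field F] :
    IsUnit (A F) ∧ IsUnit (B F) ∧
    (B F)⁻¹ * (A F) ^ 2 * B F = ((A F)⁻¹) ^ 2 ∧
    (A F)⁻¹ * (B F) ^ 2 * A F = ((B F)⁻¹) ^ 2 := by
  refine ⟨isUnit_A F, isUnit_B F, ?_, ?_⟩
  · rw [inv_mul_mul_eq_of_mul_eq (isUnit_B F) (A_sq_mul_B F), A_inv]
  · rw [inv_mul_mul_eq_of_mul_eq (isUnit_A F) (B_sq_mul_A F), B_inv]
end
end

section
/- Let G = ⟨a, b | b^{-1}a²b = a^{-2}, a^{-1}b²a = b^{-2}⟩ and set z = (ab)². Then a^{-1} z a = z^{-1} and b^{-1} z b = z^{-1}, i.e., both generators invert z under conjugation. -/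
/-!
Conjugating `z = abab` by `a` gives `baba`, and `abab · baba = 1` follows by moving `b²` past `a`
and then `a²` past `b` with the two relations. As `ab` commutes with its square `z`, conjugation
by `b = a⁻¹ · ab` acts on `z` as conjugation by `a⁻¹`, which is inversion as well.
-/

noncomputable section

/-- The relators `b⁻¹a²ba²` and `a⁻¹b²ab²` of the Promislow group. -/
def promislowRels : Set (FreeGroup (Fin 2)) :=
  {(FreeGroup.of 1)⁻¹ * (FreeGroup.of 0) ^ 2 * FreeGroup.of 1 * (FreeGroup.of 0) ^ 2,
   (FreeGroup.of 0)⁻¹ * (FreeGroup.of 1) ^ 2 * FreeGroup.of 0 * (FreeGroup.of 1) ^ 2}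

/-- The Promislow group `G = ⟨a, b | b⁻¹a²b = a⁻², a⁻¹b²a = b⁻²⟩`. -/
abbrev PromislowGroup := PresentedGroup promislowRels

/-- The generator `a` of the Promislow group. -/
def pa : PromislowGroup := PresentedGroup.of 0

/-- The generator `b` of the Promislow group. -/
def pb : PromislowGroup := PresentedGroup.of 1

/-- The element `z = (ab)²` of the Promislow group. -/
def pz : PromislowGroup := (pa * pb) ^ 2

section Group

variable {G : Type*} [Group G] {a b z : G}

theorem inv_mul_mul_sq_mul_eq_inv_of_relators (ha : b⁻¹ * a ^ 2 * b * a ^ 2 = 1)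
    (hb : a⁻¹ * b ^ 2 * a * b ^ 2 = 1) : a⁻¹ * (a * b) ^ 2 * a = ((a * b) ^ 2)⁻¹ := by
  rw [sq] at ha hb ⊢
  refine eq_inv_of_mul_eq_one_right ?_
  calc a * b * (a * b) * (a⁻¹ * (a * b * (a * b)) * a)
      = a * b * (a * a) * (a⁻¹ * (b * b) * a * (b * b)) * (b⁻¹ * a) := by group
    _ = a⁻¹ * b * (b⁻¹ * (a * a) * b * (a * a)) * b⁻¹ * a := by rw [hb]; group
    _ = 1 := by rw [ha]; group

theorem inv_mul_mul_eq_inv_of_commute_mul (hz : Commute (a * b) z) (ha : a⁻¹ * z * a = z⁻¹) :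
    b⁻¹ * z * b = z⁻¹ := by
  have ha' : a⁻¹ * z⁻¹ * a = z := by simpa [mul_assoc] using congrArg Inv.inv ha
  calc b⁻¹ * z * b = b⁻¹ * (a⁻¹ * z⁻¹ * a) * b := by rw [ha']
    _ = (a * b)⁻¹ * (z⁻¹ * (a * b)) := by group
    _ = z⁻¹ := by rw [← hz.inv_right.eq, inv_mul_cancel_left]

end Group

theorem promislow_relator_a : pb⁻¹ * pa ^ 2 * pb * pa ^ 2 = 1 :=
  PresentedGroup.one_of_mem (Set.mem_insert _ _)

theorem promislow_relator_b : pa⁻¹ * pb ^ 2 * pa * pb ^ 2 = 1 :=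
  PresentedGroup.one_of_mem (Set.mem_insert_of_mem _ rfl)

/-- In the Promislow group, both generators invert `z = (ab)²` under conjugation. -/
theorem generators_invert_z :
    pa⁻¹ * pz * pa = pz⁻¹ ∧ pb⁻¹ * pz * pb = pz⁻¹ := by
  have ha : pa⁻¹ * pz * pa = pz⁻¹ :=
    inv_mul_mul_sq_mul_eq_inv_of_relators promislow_relator_a promislow_relator_b
  exact ⟨ha, inv_mul_mul_eq_inv_of_commute_mul ((Commute.refl _).pow_right 2) ha⟩
end
end

section
/- Let G = ⟨a, b | b^{-1}a²b = a^{-2}, a^{-1}b²a = b^{-2}⟩, z = (ab)², and fix integers t, w. Then the elements ā = z^w z^{-t} a and b̄ = z^w b satisfy ā² = a², b̄² = b², and (āb̄)² = z^{1-2t}; in particular ā and b̄ satisfy the defining relations b̄^{-1}ā²b̄ = ā^{-2} and ā^{-1}b̄²ā = b̄^{-2}, so there is a group homomorphism σ: G → G with σ(a) = ā and σ(b) = b̄. -/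
noncomputable section

namespace PromislowAux

lemma mk_rel_eq_one {r : FreeGroup (Fin 2)} (h : r ∈ promislowRels) :
    PresentedGroup.mk promislowRels r = 1 :=
  (QuotientGroup.eq_one_iff r).2 (Subgroup.subset_normalClosure h)

lemma hrel1 : pb⁻¹ * pa ^ 2 * pb * pa ^ 2 = 1 := by
  have h := mk_rel_eq_one (r := (FreeGroup.of 1)⁻¹ * (FreeGroup.of 0) ^ 2 * FreeGroup.of 1 *
      (FreeGroup.of 0) ^ 2) (by left; rfl)
  simpa [map_mul, map_pow, map_inv, pa, pb, PresentedGroup.of] using h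

lemma hrel2 : pa⁻¹ * pb ^ 2 * pa * pb ^ 2 = 1 := by
  have h := mk_rel_eq_one (r := (FreeGroup.of 0)⁻¹ * (FreeGroup.of 1) ^ 2 * FreeGroup.of 0 *
      (FreeGroup.of 1) ^ 2) (by right; rfl)
  simpa [map_mul, map_pow, map_inv, pa, pb, PresentedGroup.of] using h

/- `b² a = a b⁻²` -/
lemma e1 : pb ^ 2 * pa = pa * (pb ^ 2)⁻¹ := by
  calc pb ^ 2 * pa = pa * (pa⁻¹ * pb ^ 2 * pa * pb ^ 2) * (pb ^ 2)⁻¹ := by group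
  _ = pa * 1 * (pb ^ 2)⁻¹ := by rw [hrel2]
  _ = pa * (pb ^ 2)⁻¹ := by group

/- `b a² = a⁻² b` -/
lemma e2 : pb * pa ^ 2 = (pa ^ 2)⁻¹ * pb := by
  calc pb * pa ^ 2 = (pa ^ 2)⁻¹ * pb * (pb⁻¹ * pa ^ 2 * pb * pa ^ 2) := by group
  _ = (pa ^ 2)⁻¹ * pb * 1 := by rw [hrel1]
  _ = (pa ^ 2)⁻¹ * pb := by group

/- `a² b = b a⁻²` -/
lemma e3 : pa ^ 2 * pb = pb * (pa ^ 2)⁻¹ := by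
  calc pa ^ 2 * pb = pb * (pb⁻¹ * pa ^ 2 * pb * pa ^ 2) * (pa ^ 2)⁻¹ := by group
  _ = pb * 1 * (pa ^ 2)⁻¹ := by rw [hrel1]
  _ = pb * (pa ^ 2)⁻¹ := by group

/- `a⁻¹ b² = b⁻² a⁻¹` -/
lemma e4 : pa⁻¹ * pb ^ 2 = (pb ^ 2)⁻¹ * pa⁻¹ := by
  calc pa⁻¹ * pb ^ 2 = pa⁻¹ * (pb ^ 2 * pa) * pa⁻¹ := by group
  _ = pa⁻¹ * (pa * (pb ^ 2)⁻¹) * pa⁻¹ := by rw [e1]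
  _ = (pb ^ 2)⁻¹ * pa⁻¹ := by group

lemma pz_expand : pz = pa * pb * (pa * pb) := by rw [pz, sq]

/-- `a⁻¹ z a = z⁻¹` -/
lemma conj_a : pa⁻¹ * pz * pa = pz⁻¹ := by
  have key : pz * (pa⁻¹ * pz * pa) = 1 := by
    calc pz * (pa⁻¹ * pz * pa)
        = pa * pb * pa * (pb ^ 2 * pa) * (pb * pa) := by
          rw [pz_expand]; simp only [pow_two]; group
    _ = pa * pb * pa * (pa * (pb ^ 2)⁻¹) * (pb * pa) := by rw [e1]
    _ = pa * (pb * pa ^ 2) * (pb⁻¹ * pa) := by simp only [pow_two]; group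
    _ = pa * ((pa ^ 2)⁻¹ * pb) * (pb⁻¹ * pa) := by rw [e2]
    _ = 1 := by group
  calc pa⁻¹ * pz * pa = pz⁻¹ * (pz * (pa⁻¹ * pz * pa)) := by group
  _ = pz⁻¹ * 1 := by rw [key]
  _ = pz⁻¹ := by group

/-- `b⁻¹ z b = z⁻¹` -/
lemma conj_b : pb⁻¹ * pz * pb = pz⁻¹ := by
  have key : pz * (pb⁻¹ * pz * pb) = 1 := by
    calc pz * (pb⁻¹ * pz * pb)
        = pa * pb * (pa ^ 2 * pb) * (pa * pb ^ 2) := by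
          rw [pz_expand]; simp only [pow_two]; group
    _ = pa * pb * (pb * (pa ^ 2)⁻¹) * (pa * pb ^ 2) := by rw [e3]
    _ = pa * pb ^ 2 * (pa⁻¹ * pb ^ 2) := by simp only [pow_two]; group
    _ = pa * pb ^ 2 * ((pb ^ 2)⁻¹ * pa⁻¹) := by rw [e4]
    _ = 1 := by group
  calc pb⁻¹ * pz * pb = pz⁻¹ * (pz * (pb⁻¹ * pz * pb)) := by group
  _ = pz⁻¹ * 1 := by rw [key]
  _ = pz⁻¹ := by group

section generic
variable {G : Type*} [Group G] {x z : G}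

lemma conj_flip (h : x⁻¹ * z * x = z⁻¹) : x * z * x⁻¹ = z⁻¹ := by
  have h2 : z = x * z⁻¹ * x⁻¹ := by rw [← h]; group
  calc x * z * x⁻¹ = (x * z⁻¹ * x⁻¹)⁻¹ := by group
  _ = z⁻¹ := by rw [← h2]

lemma swap_gen (h : x * z * x⁻¹ = z⁻¹) (n : ℤ) (y : G) :
    x * (z ^ n * y) = z ^ (-n) * (x * y) := by
  have h2 : x * z ^ n * x⁻¹ = z ^ (-n) := by
    rw [← conj_zpow, h, inv_zpow, zpow_neg]
  calc x * (z ^ n * y) = (x * z ^ n * x⁻¹) * (x * y) := by group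
  _ = z ^ (-n) * (x * y) := by rw [h2]

end generic

/-- swap rules -/
lemma swa (n : ℤ) (y : PromislowGroup) : pa * (pz ^ n * y) = pz ^ (-n) * (pa * y) :=
  swap_gen (conj_flip conj_a) n y

lemma swb (n : ℤ) (y : PromislowGroup) : pb * (pz ^ n * y) = pz ^ (-n) * (pb * y) :=
  swap_gen (conj_flip conj_b) n y

lemma swa_inv (n : ℤ) (y : PromislowGroup) : pa⁻¹ * (pz ^ n * y) = pz ^ (-n) * (pa⁻¹ * y) := by
  have h : pa⁻¹ * pz * pa⁻¹⁻¹ = pz⁻¹ := by rw [inv_inv]; exact conj_a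
  exact swap_gen h n y

lemma swb_inv (n : ℤ) (y : PromislowGroup) : pb⁻¹ * (pz ^ n * y) = pz ^ (-n) * (pb⁻¹ * y) := by
  have h : pb⁻¹ * pz * pb⁻¹⁻¹ = pz⁻¹ := by rw [inv_inv]; exact conj_b
  exact swap_gen h n y

lemma zz (m n : ℤ) (y : PromislowGroup) : pz ^ m * (pz ^ n * y) = pz ^ (m + n) * y := by
  rw [← mul_assoc, ← zpow_add]

lemma zz' (m n : ℤ) : pz ^ m * pz ^ n = pz ^ (m + n) := (zpow_add pz m n).symm

lemma swa' (n : ℤ) : pa * pz ^ n = pz ^ (-n) * pa := by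
  have := swa n 1; simpa using this

lemma swb' (n : ℤ) : pb * pz ^ n = pz ^ (-n) * pb := by
  have := swb n 1; simpa using this

lemma r1' : pb⁻¹ * (pa * (pa * pb)) = (pa ^ 2)⁻¹ := by
  calc pb⁻¹ * (pa * (pa * pb)) = (pb⁻¹ * pa ^ 2 * pb * pa ^ 2) * (pa ^ 2)⁻¹ := by
        simp only [pow_two]; group
  _ = 1 * (pa ^ 2)⁻¹ := by rw [hrel1]
  _ = (pa ^ 2)⁻¹ := by group

lemma r2' : pa⁻¹ * (pb * (pb * pa)) = (pb ^ 2)⁻¹ := by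
  calc pa⁻¹ * (pb * (pb * pa)) = (pa⁻¹ * pb ^ 2 * pa * pb ^ 2) * (pb ^ 2)⁻¹ := by
        simp only [pow_two]; group
  _ = 1 * (pb ^ 2)⁻¹ := by rw [hrel2]
  _ = (pb ^ 2)⁻¹ := by group

lemma habab : pa * (pb * (pa * pb)) = pz ^ (1 : ℤ) := by
  rw [zpow_one, pz_expand, mul_assoc]

end PromislowAux

/-- For integers `t, w`, the elements `ā = z^w z^{-t} a` and `b̄ = z^w b` satisfy
`ā² = a²`, `b̄² = b²`, `(āb̄)² = z^{1-2t}`, the defining relations of the Promislow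
group, and hence there is an endomorphism `σ` with `σ(a) = ā`, `σ(b) = b̄`. -/
theorem shifted_generators_satisfy_relations (t w : ℤ) :
    (pz ^ w * pz ^ (-t) * pa) ^ 2 = pa ^ 2 ∧
    (pz ^ w * pb) ^ 2 = pb ^ 2 ∧
    (pz ^ w * pz ^ (-t) * pa * (pz ^ w * pb)) ^ 2 = pz ^ (1 - 2 * t) ∧
    (pz ^ w * pb)⁻¹ * (pz ^ w * pz ^ (-t) * pa) ^ 2 * (pz ^ w * pb) =
      ((pz ^ w * pz ^ (-t) * pa) ^ 2)⁻¹ ∧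
    (pz ^ w * pz ^ (-t) * pa)⁻¹ * (pz ^ w * pb) ^ 2 * (pz ^ w * pz ^ (-t) * pa) =
      ((pz ^ w * pb) ^ 2)⁻¹ ∧
    ∃ σ : PromislowGroup →* PromislowGroup,
      σ pa = pz ^ w * pz ^ (-t) * pa ∧ σ pb = pz ^ w * pb := by
  open PromislowAux in
  have h1 : (pz ^ w * pz ^ (-t) * pa) ^ 2 = pa ^ 2 := by
    simp only [pow_two, mul_assoc, zz, zz', swa, swa', swb, swb']
    rw [show w + -t + -(w + -t) = (0 : ℤ) by ring, zpow_zero, one_mul]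
  open PromislowAux in
  have h2 : (pz ^ w * pb) ^ 2 = pb ^ 2 := by
    simp only [pow_two, mul_assoc, zz, zz', swa, swa', swb, swb']
    rw [show w + -w = (0 : ℤ) by ring, zpow_zero, one_mul]
  open PromislowAux in
  have h3 : (pz ^ w * pz ^ (-t) * pa * (pz ^ w * pb)) ^ 2 = pz ^ (1 - 2 * t) := by
    simp only [pow_two, mul_assoc, zz, zz', swa, swa', swb, swb']
    rw [habab, zz', show w + -t + -w + - -(w + -t + -w) + 1 = 1 - 2 * t by ring]
  open PromislowAux in
  have h4 : (pz ^ w * pb)⁻¹ * (pz ^ w * pz ^ (-t) * pa) ^ 2 * (pz ^ w * pb) =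
      ((pz ^ w * pz ^ (-t) * pa) ^ 2)⁻¹ := by
    rw [h1]
    simp only [pow_two, mul_inv_rev, ← zpow_neg, mul_assoc, zz, zz', swa, swa', swb, swb',
      swa_inv, swb_inv]
    rw [show - -w + - - -w = (0 : ℤ) by ring, zpow_zero, one_mul, r1', pow_two, mul_inv_rev]
  open PromislowAux in
  have h5 : (pz ^ w * pz ^ (-t) * pa)⁻¹ * (pz ^ w * pb) ^ 2 * (pz ^ w * pz ^ (-t) * pa) =
      ((pz ^ w * pb) ^ 2)⁻¹ := by
    rw [h2]
    simp only [pow_two, mul_inv_rev, ← zpow_neg, mul_assoc, zz, zz', swa, swa', swb, swb',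
      swa_inv, swb_inv]
    rw [show - -(w + -t) + - - -(w + -t) = (0 : ℤ) by ring, zpow_zero, one_mul, r2',
      pow_two, mul_inv_rev]
  refine ⟨h1, h2, h3, h4, h5, ?_⟩
  have hrels : ∀ r ∈ promislowRels,
      FreeGroup.lift ![pz ^ w * pz ^ (-t) * pa, pz ^ w * pb] r = 1 := by
    intro r hr
    rcases hr with rfl | rfl
    · simp only [map_mul, map_pow, map_inv, FreeGroup.lift_apply_of, Matrix.cons_val_zero,
        Matrix.cons_val_one, Matrix.head_cons]
      rw [h4]
      group
    · simp only [map_mul, map_pow, map_inv, FreeGroup.lift_apply_of, Matrix.cons_val_zero,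
        Matrix.cons_val_one, Matrix.head_cons]
      rw [h5]
      group
  refine ⟨PresentedGroup.toGroup hrels, ?_, ?_⟩
  · exact (PresentedGroup.toGroup.of hrels (x := 0)).trans (by simp)
  · exact (PresentedGroup.toGroup.of hrels (x := 1)).trans (by simp)
end
end

section
/- Let G = ⟨a, b | b^{-1}a²b = a^{-2}, a^{-1}b²a = b^{-2}⟩ and let σ: G → G be the homomorphism with σ(a) = z^{w-t}a and σ(b) = z^w b, where z = (ab)². If t ≠ 0 or equivalently 1 - 2t ≠ 1, σ maps z to z^{1-2t} and fixes a² and b²; since 1 - 2t ≠ 0 for all integers t, σ is injective on the free abelian subgroup H = ⟨a², b², z⟩ and hence injective on G. -/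
noncomputable section

/-!
The subgroup `H = ⟨a², b², z⟩` is normal with quotient `(ℤ/2)²`: conjugation by `a` and `b`
only changes signs of its generators, so every element is `h · s` with `h ∈ H` and
`s ∈ {1, a, b, ab}`, and the parity character `a ↦ (-1, 1)`, `b ↦ (1, -1)` has kernel `H`.
`G` acts on `ℤ³` by affine maps in which `a²`, `b²`, `z` translate by `2e₀`, `2e₁`, `2e₂`,
so `H ≅ ℤ³` freely on `a², b², z`. As `σ` moves `a`, `b` only by powers of `z ∈ H`,
it commutes with the parity character, hence `ker σ ≤ H`; on `H ≅ ℤ³` it is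
`diag(1, 1, 1 - 2t)`, injective because `1 - 2t` is odd.
-/

namespace Promislow

section SemiconjInv

variable {G : Type*} [Group G] {x y : G}

theorem semiconjBy_inv_of_mul_eq_one (h : x⁻¹ * y * x * y = 1) : SemiconjBy x y y⁻¹ :=
  calc x * y = x * y * (x⁻¹ * y * x * y)⁻¹ := by rw [h, inv_one, mul_one]
    _ = y⁻¹ * x := by group

theorem mul_zpow_of_semiconjBy_inv (h : SemiconjBy x y y⁻¹) (n : ℤ) :
    x * y ^ n = y ^ (-n) * x := by
  rw [(h.zpow_right n).eq, inv_zpow']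

theorem commute_sq_of_semiconjBy_inv (h : SemiconjBy x y y⁻¹) : Commute (x ^ 2) y := by
  rw [sq]
  have h' : SemiconjBy x y⁻¹ y := by simpa using h.inv_right
  exact h'.mul_left h

theorem zpow_mul_sq_of_semiconjBy_inv (h : SemiconjBy x y y⁻¹) (n : ℤ) :
    (y ^ n * x) ^ 2 = x ^ 2 := by
  rw [sq, sq, mul_assoc, ← mul_assoc x, mul_zpow_of_semiconjBy_inv h, mul_assoc,
    ← mul_assoc, ← zpow_add, add_neg_cancel, zpow_zero, one_mul]

end SemiconjInv

def lift {K : Type*} [Group K] (x y : K) (h₁ : y⁻¹ * x ^ 2 * y * x ^ 2 = 1)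
    (h₂ : x⁻¹ * y ^ 2 * x * y ^ 2 = 1) : PromislowGroup →* K :=
  PresentedGroup.toGroup (f := ![x, y]) <| by
    rintro r (rfl | rfl) <;> simpa

@[simp] theorem lift_pa {K : Type*} [Group K] (x y : K) h₁ h₂ : lift x y h₁ h₂ pa = x :=
  PresentedGroup.toGroup.of _

@[simp] theorem lift_pb {K : Type*} [Group K] (x y : K) h₁ h₂ : lift x y h₁ h₂ pb = y :=
  PresentedGroup.toGroup.of _

theorem hom_ext {K : Type*} [Group K] {φ ψ : PromislowGroup →* K} (ha : φ pa = ψ pa)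
    (hb : φ pb = ψ pb) : φ = ψ :=
  PresentedGroup.ext fun i => by fin_cases i <;> assumption

theorem semiconjBy_pb_pa_sq : SemiconjBy pb (pa ^ 2) (pa ^ 2)⁻¹ :=
  semiconjBy_inv_of_mul_eq_one <| (QuotientGroup.eq_one_iff _).mpr <|
    Subgroup.subset_normalClosure (Set.mem_insert _ _)

theorem semiconjBy_pa_pb_sq : SemiconjBy pa (pb ^ 2) (pb ^ 2)⁻¹ :=
  semiconjBy_inv_of_mul_eq_one <| (QuotientGroup.eq_one_iff _).mpr <|
    Subgroup.subset_normalClosure (Set.mem_insert_of_mem _ rfl)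

theorem semiconjBy_pa_pz : SemiconjBy pa pz pz⁻¹ := by
  have h₁ : pb * (pa * pa) = (pa * pa)⁻¹ * pb := by simpa [sq] using semiconjBy_pb_pa_sq.eq
  have h₂ : pa * (pb * pb)⁻¹ = pb * pb * pa := by
    simpa [sq] using semiconjBy_pa_pb_sq.inv_right.eq
  have h : pz * pa * pz = pa :=
    calc pz * pa * pz = pa * pb * pa * (pb * (pa * pa)) * pb * pa * pb := by rw [pz, sq]; group
      _ = pa * pb * pa⁻¹ * (pb * pb * pa) * pb := by rw [h₁]; group
      _ = pa := by rw [← h₂]; group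
  calc pa * pz = pz⁻¹ * (pz * pa * pz) := by group
    _ = pz⁻¹ * pa := by rw [h]

theorem semiconjBy_pb_pz : SemiconjBy pb pz pz⁻¹ := by
  have h : SemiconjBy pa⁻¹ pz pz⁻¹ := by simpa using semiconjBy_pa_pz.inv_symm_left.inv_right
  have h' := h.mul_left (Commute.self_pow (pa * pb) 2)
  rwa [inv_mul_cancel_left] at h'

/-- Parametrises the translation lattice `H = ⟨a², b², z⟩ ≅ ℤ³` of `G`. -/
def lat (i j k : ℤ) : PromislowGroup := (pa ^ 2) ^ i * (pb ^ 2) ^ j * pz ^ k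

theorem lat_mul (i j k i' j' k' : ℤ) :
    lat i j k * lat i' j' k' = lat (i + i') (j + j') (k + k') := by
  have hab : Commute (pa ^ 2) (pb ^ 2) := commute_sq_of_semiconjBy_inv semiconjBy_pa_pb_sq
  have haz : Commute (pa ^ 2) pz := commute_sq_of_semiconjBy_inv semiconjBy_pa_pz
  have hbz : Commute (pb ^ 2) pz := commute_sq_of_semiconjBy_inv semiconjBy_pb_pz
  have hz : Commute (pz ^ k) ((pa ^ 2) ^ i' * (pb ^ 2) ^ j') :=
    ((haz.zpow_zpow i' k).symm).mul_right (hbz.zpow_zpow j' k).symm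
  rw [lat, lat, hz.mul_mul_mul_comm, (hab.zpow_zpow i' j).symm.mul_mul_mul_comm, lat,
    zpow_add, zpow_add, zpow_add]

theorem map_lat (f : PromislowGroup →* PromislowGroup) {p q r : ℤ}
    (ha : f (pa ^ 2) = (pa ^ 2) ^ p) (hb : f (pb ^ 2) = (pb ^ 2) ^ q) (hz : f pz = pz ^ r)
    (i j k : ℤ) : f (lat i j k) = lat (p * i) (q * j) (r * k) := by
  simp only [lat, map_mul, map_zpow, ha, hb, hz, zpow_mul]

theorem pa_mul_lat (i j k : ℤ) : pa * lat i j k = lat i (-j) (-k) * pa := by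
  have h := map_lat (MulAut.conj pa).toMonoidHom (p := 1) (q := -1) (r := -1)
    (by simp [MulAut.conj_apply, (Commute.self_pow pa 2).eq])
    (by simp [MulAut.conj_apply, semiconjBy_pa_pb_sq.eq])
    (by simp [MulAut.conj_apply, semiconjBy_pa_pz.eq]) i j k
  exact mul_inv_eq_iff_eq_mul.mp (by simpa [MulAut.conj_apply] using h)

theorem pb_mul_lat (i j k : ℤ) : pb * lat i j k = lat (-i) j (-k) * pb := by
  have h := map_lat (MulAut.conj pb).toMonoidHom (p := -1) (q := 1) (r := -1)
    (by simp [MulAut.conj_apply, semiconjBy_pb_pa_sq.eq])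
    (by simp [MulAut.conj_apply, (Commute.self_pow pb 2).eq])
    (by simp [MulAut.conj_apply, semiconjBy_pb_pz.eq]) i j k
  exact mul_inv_eq_iff_eq_mul.mp (by simpa [MulAut.conj_apply] using h)

theorem pb_mul_pa : pb * pa = lat (-1) 1 (-1) * (pa * pb) :=
  calc pb * pa = pb * pa ^ 2 * pa⁻¹ := by group
    _ = (pa ^ 2)⁻¹ * pb * pa⁻¹ := by rw [semiconjBy_pb_pa_sq.eq]
    _ = lat (-1) 1 (-1) * (pa * pb) := by simp only [lat, pz, sq]; group

def cosetReps : Set PromislowGroup := {1, pa, pb, pa * pb}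

def HasNormalForm (g : PromislowGroup) : Prop :=
  ∃ i j k, ∃ s ∈ cosetReps, g = lat i j k * s

theorem HasNormalForm.of_mem_cosetReps {s : PromislowGroup} (hs : s ∈ cosetReps) :
    HasNormalForm s :=
  ⟨0, 0, 0, s, hs, by simp [lat]⟩

theorem HasNormalForm.lat_mul {g : PromislowGroup} (h : HasNormalForm g) (i j k : ℤ) :
    HasNormalForm (lat i j k * g) := by
  obtain ⟨i', j', k', s, hs, rfl⟩ := h
  exact ⟨_, _, _, s, hs, by rw [← mul_assoc, Promislow.lat_mul]⟩

theorem HasNormalForm.mul_left {x g : PromislowGroup}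
    (hx : ∀ i j k, ∃ i' j' k', x * lat i j k = lat i' j' k' * x)
    (hxs : ∀ s ∈ cosetReps, HasNormalForm (x * s)) (h : HasNormalForm g) :
    HasNormalForm (x * g) := by
  obtain ⟨i, j, k, s, hs, rfl⟩ := h
  obtain ⟨i', j', k', e⟩ := hx i j k
  rw [← mul_assoc, e, mul_assoc]
  exact (hxs s hs).lat_mul i' j' k'

theorem HasNormalForm.pa_mul {g : PromislowGroup} (h : HasNormalForm g) :
    HasNormalForm (pa * g) := by
  refine h.mul_left (fun i j k => ⟨_, _, _, pa_mul_lat i j k⟩) ?_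
  rintro s (rfl | rfl | rfl | rfl)
  · exact .of_mem_cosetReps (by simp [cosetReps])
  · exact ⟨1, 0, 0, 1, by simp [cosetReps], by simp [lat, sq]⟩
  · exact .of_mem_cosetReps (by simp [cosetReps])
  · exact ⟨1, 0, 0, pb, by simp [cosetReps], by simp [lat, sq, mul_assoc]⟩

theorem HasNormalForm.pb_mul {g : PromislowGroup} (h : HasNormalForm g) :
    HasNormalForm (pb * g) := by
  refine h.mul_left (fun i j k => ⟨_, _, _, pb_mul_lat i j k⟩) ?_
  rintro s (rfl | rfl | rfl | rfl)
  · exact .of_mem_cosetReps (by simp [cosetReps])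
  · exact ⟨-1, 1, -1, pa * pb, by simp [cosetReps], pb_mul_pa⟩
  · exact ⟨0, 1, 0, 1, by simp [cosetReps], by simp [lat, sq]⟩
  · refine ⟨-1, 0, -1, pa, by simp [cosetReps], ?_⟩
    calc pb * (pa * pb) = lat (-1) 1 (-1) * (pa * lat 0 1 0) := by
          rw [← mul_assoc, pb_mul_pa]; simp [lat, sq, mul_assoc]
      _ = lat (-1) 0 (-1) * pa := by
          rw [pa_mul_lat, ← mul_assoc, Promislow.lat_mul]; norm_num

theorem hasNormalForm (g : PromislowGroup) : HasNormalForm g := by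
  have hg : g ∈ Subgroup.closure (Set.range PresentedGroup.of) := by
    rw [PresentedGroup.closure_range_of]; trivial
  induction hg using Subgroup.closure_induction_left with
  | one => exact .of_mem_cosetReps (by simp [cosetReps])
  | mul_left x hx y _ ih =>
    obtain ⟨n, rfl⟩ := hx
    fin_cases n
    · exact ih.pa_mul
    · exact ih.pb_mul
  | inv_mul_cancel x hx y _ ih =>
    obtain ⟨n, rfl⟩ := hx
    fin_cases n
    · have e : pa⁻¹ * y = lat (-1) 0 0 * (pa * y) := by simp only [lat, sq]; group
      exact e ▸ ih.pa_mul.lat_mul (-1) 0 0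
    · have e : pb⁻¹ * y = lat 0 (-1) 0 * (pb * y) := by simp only [lat, sq]; group
      exact e ▸ ih.pb_mul.lat_mul 0 (-1) 0

def parityHom : PromislowGroup →* ℤˣ × ℤˣ := lift (-1, 1) (1, -1) (by decide) (by decide)

@[simp] theorem parityHom_pa : parityHom pa = (-1, 1) := lift_pa ..

@[simp] theorem parityHom_pb : parityHom pb = (1, -1) := lift_pb ..

@[simp] theorem parityHom_pz : parityHom pz = 1 := by
  simp [pz]

theorem parityHom_lat (i j k : ℤ) : parityHom (lat i j k) = 1 := by
  simp [lat]

theorem exists_lat_of_parityHom_eq_one {g : PromislowGroup} (h : parityHom g = 1) :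
    ∃ i j k, g = lat i j k := by
  obtain ⟨i, j, k, s, hs, rfl⟩ := hasNormalForm g
  rw [map_mul, parityHom_lat, one_mul] at h
  rcases hs with rfl | rfl | rfl | rfl
  · exact ⟨i, j, k, mul_one _⟩
  all_goals simp at h

def affineA : Equiv.Perm (Fin 3 → ℤ) where
  toFun p := ![p 0 + 1, -p 1, -p 2]
  invFun p := ![p 0 - 1, -p 1, -p 2]
  left_inv p := by ext i; fin_cases i <;> simp
  right_inv p := by ext i; fin_cases i <;> simp

def affineB : Equiv.Perm (Fin 3 → ℤ) where
  toFun p := ![-p 0, p 1 + 1, -p 2 - 1]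
  invFun p := ![-p 0, p 1 - 1, -p 2 - 1]
  left_inv p := by ext i; fin_cases i <;> simp
  right_inv p := by ext i; fin_cases i <;> simp

def affineAction : PromislowGroup →* Equiv.Perm (Fin 3 → ℤ) :=
  lift affineA affineB
    (by ext p i; fin_cases i <;> simp [affineA, affineB, sq, Equiv.Perm.inv_def])
    (by ext p i; fin_cases i <;> simp [affineA, affineB, sq, Equiv.Perm.inv_def])

theorem affineAction_lat (i j k : ℤ) :
    affineAction (lat i j k) = Equiv.addRight ![2 * i, 2 * j, 2 * k] := by
  have ha : affineAction (pa ^ 2) = Equiv.addRight ![2, 0, 0] := by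
    ext p l; fin_cases l <;> simp [affineAction, affineA, sq, add_assoc, one_add_one_eq_two]
  have hb : affineAction (pb ^ 2) = Equiv.addRight ![0, 2, 0] := by
    ext p l; fin_cases l <;> simp [affineAction, affineB, sq, add_assoc, one_add_one_eq_two]
  have hz : affineAction pz = Equiv.addRight ![0, 0, 2] := by
    ext p l; fin_cases l <;> simp [affineAction, affineA, affineB, pz, sq]; ring
  simp only [lat, map_mul, map_zpow, ha, hb, hz, Equiv.zsmul_addRight, ← Equiv.addRight_add]
  congr 1
  ext l; fin_cases l <;> simp <;> ring

theorem lat_eq_one_iff {i j k : ℤ} : lat i j k = 1 ↔ i = 0 ∧ j = 0 ∧ k = 0 := by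
  refine ⟨fun h => ?_, by rintro ⟨rfl, rfl, rfl⟩; simp [lat]⟩
  have h0 : (![2 * i, 2 * j, 2 * k] : Fin 3 → ℤ) = 0 := by
    simpa [h] using (Equiv.ext_iff.mp (affineAction_lat i j k) 0).symm
  simpa using h0

theorem injective_of_map_lat {f : PromislowGroup →* PromislowGroup} {p q r : ℤ}
    (ha : f (pa ^ 2) = (pa ^ 2) ^ p) (hb : f (pb ^ 2) = (pb ^ 2) ^ q) (hz : f pz = pz ^ r)
    (hp : p ≠ 0) (hq : q ≠ 0) (hr : r ≠ 0) (hf : parityHom.comp f = parityHom) :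
    Function.Injective f := by
  rw [injective_iff_map_eq_one]
  intro g hg
  obtain ⟨i, j, k, rfl⟩ := exists_lat_of_parityHom_eq_one (g := g) (by
    rw [← hf, MonoidHom.comp_apply, hg, map_one])
  rw [map_lat f ha hb hz, lat_eq_one_iff] at hg
  simpa [lat_eq_one_iff, hp, hq, hr] using hg

end Promislow

open Promislow in
/-- For integers `t, w`, any endomorphism `σ` of the Promislow group with
`σ(a) = z^{w-t}a` and `σ(b) = z^w b` sends `z ↦ z^{1-2t}`, fixes `a²` and `b²`, and
is injective. -/
theorem sigma_injective (t w : ℤ) (σ : PromislowGroup →* PromislowGroup)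
    (ha : σ pa = pz ^ (w - t) * pa) (hb : σ pb = pz ^ w * pb) :
    σ pz = pz ^ (1 - 2 * t) ∧ σ (pa ^ 2) = pa ^ 2 ∧ σ (pb ^ 2) = pb ^ 2 ∧
      Function.Injective σ := by
  have hσz : σ pz = pz ^ (1 - 2 * t) := by
    have hab : σ pa * σ pb = pz ^ (-t) * (pa * pb) := by
      rw [ha, hb, mul_assoc, ← mul_assoc pa, mul_zpow_of_semiconjBy_inv semiconjBy_pa_pz]
      group
    have hcomm : Commute (pz ^ (-t)) (pa * pb) := (Commute.self_pow (pa * pb) 2).symm.zpow_left _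
    rw [pz, map_pow, map_mul, hab, hcomm.mul_pow, ← pz]
    group
  have hσa : σ (pa ^ 2) = pa ^ 2 := by
    rw [map_pow, ha, zpow_mul_sq_of_semiconjBy_inv semiconjBy_pa_pz]
  have hσb : σ (pb ^ 2) = pb ^ 2 := by
    rw [map_pow, hb, zpow_mul_sq_of_semiconjBy_inv semiconjBy_pb_pz]
  exact ⟨hσz, hσa, hσb, injective_of_map_lat (p := 1) (q := 1) (by simpa using hσa)
    (by simpa using hσb) hσz one_ne_zero one_ne_zero (by omega)
    (hom_ext (by simp [ha]) (by simp [hb]))⟩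
end
end

section
/- In the group G = ⟨a, b | b^{-1}a²b = a^{-2}, a^{-1}b²a = b^{-2}⟩, the subgroup H generated by x = a², y = b², and z = (ab)² is normal in G, and the quotient G/H is a Klein fours group generated by the images of a and b. -/
noncomputable section

/-!
Conjugation by `a` or by `b` sends each of `a²`, `b²`, `z = (ab)²` to itself or to its inverse:
for `a²`, `b²` these are the defining relations, and for `z` it comes down to `(ba)² = z⁻¹`,
which follows from them. Since also `a², b² ∈ H`, conjugation by `a⁻¹`, `b⁻¹` preserves `H` too,
so `H` is normal. In `G/H` the images `u`, `v` of `a`, `b` satisfy `u² = v² = (uv)² = 1`, hence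
`G/H = {1, u, v, uv}`; the map `G → (ℤ/2)²`, `a ↦ (1,0)`, `b ↦ (0,1)`, kills `H` and separates
these four elements.
-/

section Generalities

variable {G : Type*} [Group G]

theorem mul_mul_inv_eq_inv_of_inv_mul_mul_eq_inv {x y : G} (h : y⁻¹ * x * y = x⁻¹) :
    y * x * y⁻¹ = x⁻¹ := by
  have hx : x = y * x⁻¹ * y⁻¹ := by rw [← h]; group
  calc y * x * y⁻¹ = (y * x⁻¹ * y⁻¹)⁻¹ := by group
    _ = x⁻¹ := by rw [← hx]

open Subgroup

theorem mem_normalizer_closure_of_sq_mem {s : Set G} {t : G}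
    (hconj : ∀ g ∈ s, t * g * t⁻¹ ∈ closure s) (hsq : t ^ 2 ∈ closure s) :
    t ∈ normalizer (closure s : Set G) := by
  have hmap : ∀ u : G, (∀ g ∈ s, u * g * u⁻¹ ∈ closure s) →
      (closure s).map (MulAut.conj u).toMonoidHom ≤ closure s := by
    intro u hu
    rw [MonoidHom.map_closure, closure_le]
    rintro _ ⟨g, hg, rfl⟩
    exact hu g hg
  rw [mem_normalizer_iff_map_conj_eq]
  refine le_antisymm (hmap t hconj) ?_
  calc closure s = (closure s).map (MulAut.conj (t ^ 2)).toMonoidHom :=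
        (mem_normalizer_iff_map_conj_eq.mp (le_normalizer hsq)).symm
    _ = ((closure s).map (MulAut.conj t).toMonoidHom).map (MulAut.conj t).toMonoidHom := by
        rw [map_map, pow_two, map_mul]; rfl
    _ ≤ (closure s).map (MulAut.conj t).toMonoidHom := map_mono (hmap t hconj)

theorem normal_closure_of_conj_mem {s T : Set G} (hT : closure T = ⊤)
    (hconj : ∀ t ∈ T, ∀ g ∈ s, t * g * t⁻¹ ∈ closure s) (hsq : ∀ t ∈ T, t ^ 2 ∈ closure s) :
    (closure s).Normal := by
  rw [← normalizer_eq_top_iff, eq_top_iff, ← hT, closure_le]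
  exact fun t ht => mem_normalizer_closure_of_sq_mem (hconj t ht) (hsq t ht)

theorem mem_of_closure_pair_eq_top {x y : G} (hgen : closure {x, y} = ⊤) (hx : x ^ 2 = 1)
    (hy : y ^ 2 = 1) (hxy : (x * y) ^ 2 = 1) (g : G) : g ∈ ({1, x, y, x * y} : Set G) := by
  rw [sq] at hx hy hxy
  have hx' : x⁻¹ = x := inv_eq_of_mul_eq_one_right hx
  have hy' : y⁻¹ = y := inv_eq_of_mul_eq_one_right hy
  have hyx : y * x = x * y :=
    calc y * x = (x * y)⁻¹ := by rw [mul_inv_rev, hx', hy']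
      _ = x * y := inv_eq_of_mul_eq_one_right hxy
  have hmul : ∀ u ∈ ({x, y} : Set G), ∀ h ∈ ({1, x, y, x * y} : Set G),
      u * h ∈ ({1, x, y, x * y} : Set G) := by
    have hyy : ∀ z, z * y * y = z := fun z => by rw [mul_assoc, hy, mul_one]
    rintro u (rfl | rfl) h (rfl | rfl | rfl | rfl) <;> simp [← mul_assoc, hx, hy, hyx, hyy]
  induction hgen ▸ mem_top g using closure_induction_left with
  | one => simp
  | mul_left u hu h _ ih => exact hmul u hu h ih
  | inv_mul_cancel u hu h _ ih =>
    have hu' : u⁻¹ = u := by obtain rfl | rfl := hu <;> assumption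
    rw [hu']; exact hmul u hu h ih

theorem isKleinFour_of_closure_pair_eq_top {K : Type*} [Group K] [IsKleinFour K] {x y : G}
    (hgen : closure {x, y} = ⊤) (hx : x ^ 2 = 1) (hy : y ^ 2 = 1) (hxy : (x * y) ^ 2 = 1)
    (f : G →* K) (hfx : f x ≠ 1) (hfy : f y ≠ 1) (hfxy : f x ≠ f y) : IsKleinFour G := by
  have hinj : Function.Injective f := by
    rw [injective_iff_map_eq_one]
    intro g hg
    obtain rfl | rfl | rfl | rfl := mem_of_closure_pair_eq_top hgen hx hy hxy g
    · rfl
    · exact absurd hg hfx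
    · exact absurd hg hfy
    · rw [map_mul, mul_eq_one_iff_eq_inv, IsKleinFour.inv_eq_self] at hg
      exact absurd hg hfxy
  have hsurj : Function.Surjective f := by
    intro k
    by_cases h1 : k = 1
    · exact ⟨1, by rw [map_one, h1]⟩
    by_cases h2 : k = f x
    · exact ⟨x, h2.symm⟩
    by_cases h3 : k = f y
    · exact ⟨y, h3.symm⟩
    exact ⟨x * y, by rw [map_mul, IsKleinFour.eq_mul_of_ne_all hfx hfy hfxy h1 h2 h3]⟩
  let e := MulEquiv.ofBijective f ⟨hinj, hsurj⟩
  exact ⟨(Nat.card_congr e.toEquiv).trans IsKleinFour.card_four,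
    (Monoid.exponent_eq_of_mulEquiv e).trans IsKleinFour.exponent_two⟩

end Generalities

namespace PromislowGroup

open Subgroup

theorem closure_pa_pb : closure {pa, pb} = ⊤ := by
  rw [← PresentedGroup.closure_range_of]
  congr 1
  ext g
  simp [Fin.exists_fin_two, pa, pb, eq_comm]

theorem pb_inv_mul_pa_sq_mul_pb : pb⁻¹ * pa ^ 2 * pb = (pa ^ 2)⁻¹ := by
  have h := PresentedGroup.one_of_mem (rels := promislowRels) (Set.mem_insert _ _)
  simp only [map_mul, map_pow, map_inv] at h
  exact mul_eq_one_iff_eq_inv.mp h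

theorem pa_inv_mul_pb_sq_mul_pa : pa⁻¹ * pb ^ 2 * pa = (pb ^ 2)⁻¹ := by
  have h := PresentedGroup.one_of_mem (rels := promislowRels) (Set.mem_insert_of_mem _ rfl)
  simp only [map_mul, map_pow, map_inv] at h
  exact mul_eq_one_iff_eq_inv.mp h

theorem pb_mul_pa_sq_mul_pb_inv : pb * pa ^ 2 * pb⁻¹ = (pa ^ 2)⁻¹ :=
  mul_mul_inv_eq_inv_of_inv_mul_mul_eq_inv pb_inv_mul_pa_sq_mul_pb

theorem pa_mul_pb_sq_mul_pa_inv : pa * pb ^ 2 * pa⁻¹ = (pb ^ 2)⁻¹ :=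
  mul_mul_inv_eq_inv_of_inv_mul_mul_eq_inv pa_inv_mul_pb_sq_mul_pa

theorem sq_pb_mul_pa : (pb * pa) ^ 2 = pz⁻¹ := by
  refine eq_inv_of_mul_eq_one_right ?_
  rw [pz]
  calc (pa * pb) ^ 2 * (pb * pa) ^ 2 = pa * pb * pa ^ 2 * (pa⁻¹ * pb ^ 2 * pa) * pb * pa := by
        simp only [sq]; group
    _ = pa * (pb * pa ^ 2 * pb⁻¹) * pa := by rw [pa_inv_mul_pb_sq_mul_pa]; group
    _ = 1 := by rw [pb_mul_pa_sq_mul_pb_inv]; group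

theorem pa_mul_pz_mul_pa_inv : pa * pz * pa⁻¹ = pz⁻¹ :=
  mul_mul_inv_eq_inv_of_inv_mul_mul_eq_inv (by rw [← sq_pb_mul_pa, pz]; simp only [sq]; group)

theorem pb_mul_pz_mul_pb_inv : pb * pz * pb⁻¹ = pz⁻¹ := by
  rw [← sq_pb_mul_pa, pz]; simp only [sq]; group

theorem normal_closure_pa_sq_pb_sq_pz : (closure {pa ^ 2, pb ^ 2, pz}).Normal := by
  refine normal_closure_of_conj_mem closure_pa_pb ?_ ?_
  · rintro t (rfl | rfl) g (rfl | rfl | rfl)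
    · rw [show pa * pa ^ 2 * pa⁻¹ = pa ^ 2 by group]; exact subset_closure (by simp)
    · rw [pa_mul_pb_sq_mul_pa_inv]; exact inv_mem (subset_closure (by simp))
    · rw [pa_mul_pz_mul_pa_inv]; exact inv_mem (subset_closure (by simp))
    · rw [pb_mul_pa_sq_mul_pb_inv]; exact inv_mem (subset_closure (by simp))
    · rw [show pb * pb ^ 2 * pb⁻¹ = pb ^ 2 by group]; exact subset_closure (by simp)
    · rw [pb_mul_pz_mul_pb_inv]; exact inv_mem (subset_closure (by simp))
  · rintro t (rfl | rfl) <;> exact subset_closure (by simp)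

instance : (closure {pa ^ 2, pb ^ 2, pz}).Normal := normal_closure_pa_sq_pb_sq_pz

/-- Each relator has even exponent sum in both generators. -/
def kleinChar : PromislowGroup →* Multiplicative (ZMod 2 × ZMod 2) :=
  PresentedGroup.toGroup (f := ![.ofAdd (1, 0), .ofAdd (0, 1)])
    (by rintro r (rfl | rfl) <;> decide)

theorem kleinChar_pa : kleinChar pa = .ofAdd (1, 0) := PresentedGroup.toGroup.of _

theorem kleinChar_pb : kleinChar pb = .ofAdd (0, 1) := PresentedGroup.toGroup.of _

theorem closure_pa_sq_pb_sq_pz_le_ker_kleinChar :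
    closure {pa ^ 2, pb ^ 2, pz} ≤ kleinChar.ker := by
  rw [closure_le]
  rintro g (rfl | rfl | rfl) <;>
    simp only [SetLike.mem_coe, MonoidHom.mem_ker, pz, map_pow, map_mul, kleinChar_pa,
      kleinChar_pb] <;>
    decide

instance isKleinFour_quotient : IsKleinFour (PromislowGroup ⧸ closure {pa ^ 2, pb ^ 2, pz}) := by
  have hmk : ∀ g ∈ ({pa ^ 2, pb ^ 2, pz} : Set PromislowGroup),
      (g : PromislowGroup ⧸ closure {pa ^ 2, pb ^ 2, pz}) = 1 :=
    fun g hg => (QuotientGroup.eq_one_iff g).mpr (subset_closure hg)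
  have hgen : closure ({↑pa, ↑pb} : Set (PromislowGroup ⧸ closure {pa ^ 2, pb ^ 2, pz})) = ⊤ := by
    rw [← Set.image_pair, ← QuotientGroup.coe_mk', ← MonoidHom.map_closure, closure_pa_pb,
      map_top_of_surjective _ (QuotientGroup.mk'_surjective _)]
  refine isKleinFour_of_closure_pair_eq_top hgen (hmk _ (by simp)) (hmk _ (by simp))
    (hmk pz (by simp)) (QuotientGroup.lift _ kleinChar closure_pa_sq_pb_sq_pz_le_ker_kleinChar)
    ?_ ?_ ?_ <;>
    simp only [QuotientGroup.lift_mk, kleinChar_pa, kleinChar_pb] <;> decide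

end PromislowGroup

/-- The subgroup `H = ⟨a², b², (ab)²⟩` is normal in the Promislow group `G`, the quotient
`G/H` has exponent `2` (every square lies in `H`), has order `4`, and is generated by the
images of `a` and `b` (i.e. `⟨a, b⟩ ⊔ H = ⊤`): it is a Klein fours group. -/
theorem quotient_is_klein_four :
    (Subgroup.closure {pa ^ 2, pb ^ 2, pz} : Subgroup PromislowGroup).Normal ∧
    (∀ g : PromislowGroup, g * g ∈ Subgroup.closure {pa ^ 2, pb ^ 2, pz}) ∧
    Nat.card (PromislowGroup ⧸ (Subgroup.closure {pa ^ 2, pb ^ 2, pz})) = 4 ∧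
    Subgroup.closure {pa, pb} ⊔ Subgroup.closure {pa ^ 2, pb ^ 2, pz} = ⊤ := by
  refine ⟨PromislowGroup.normal_closure_pa_sq_pb_sq_pz, fun g => ?_, IsKleinFour.card_four,
    by rw [PromislowGroup.closure_pa_pb, top_sup_eq]⟩
  rw [← QuotientGroup.eq_one_iff, QuotientGroup.mk_mul]
  exact IsKleinFour.mul_self _
end
end
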